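/- Let (F : C ⥤ D, G : D ⥤ C) and (F' : C ⥤ D', G' : D' ⥤ C) be adjoint pairs, with units η, η' and counits ε, ε', which determine the same monad on C, i.e., G∘F = G'∘F', η = η', and GεF = G'ε'F' (whiskered composites G(ε_{F(−)}) and G'(ε'_{F'(−)}) coincide). Let I : C ⥤ X be any functor. Then F is heavily I-separable if and only if F' is heavily I-separable. -/

import Mathlib

open CategoryTheory

/-!
The adjunction bijection `(F a ⟶ F b) ≃ (a ⟶ G (F b))` sends `F.map f` to `η ≫ GF f` and
composition in `D` to Kleisli composition for the monad `GF`. Hence heavy `I`-separability of `F`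
(whose naturality condition follows from the other two) is a property of the monad of the
adjunction alone.
-/

/-- A functor `F : C ⥤ D` is *heavily `I`-separable* (heavy separability of the second kind)
if there is a natural transformation `P : Hom_D(F −, F −) ⟶ Hom_X(I −, I −)` of functors
`Cᵒᵖ × C ⥤ Set` such that `P (F.map f) = I.map f` and `P` is compatible with composition. -/
def HeavilyISeparable {C : Type*} [Category C] {D : Type*} [Category D]
    {X : Type*} [Category X] (F : C ⥤ D) (I : C ⥤ X) : Prop :=
  ∃ P : ∀ a b : C, (F.obj a ⟶ F.obj b) → (I.obj a ⟶ I.obj b),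
    (∀ (a' a b b' : C) (u : a' ⟶ a) (v : b ⟶ b') (h : F.obj a ⟶ F.obj b),
        P a' b' (F.map u ≫ h ≫ F.map v) = I.map u ≫ P a b h ≫ I.map v) ∧
    (∀ (a b : C) (f : a ⟶ b), P a b (F.map f) = I.map f) ∧
    (∀ (a b c : C) (f : F.obj a ⟶ F.obj b) (g : F.obj b ⟶ F.obj c),
        P a c (f ≫ g) = P a b f ≫ P b c g)

/-- A functor `F : C ⥤ D` is *heavily separable* if it is heavily `𝟭 C`-separable. -/
def HeavilySeparable {C : Type*} [Category C] {D : Type*} [Category D] (F : C ⥤ D) : Prop :=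
  HeavilyISeparable F (𝟭 C)

/-- The morphisms `a ⟶ T b` are those of the Kleisli category of `T`; `Q` is a functor from it to
`X` extending `I` along the free functor `C ⥤ Kl(T)`. -/
def CategoryTheory.Monad.HeavilyISeparable {C X : Type*} [Category C] [Category X] (T : Monad C)
    (I : C ⥤ X) : Prop :=
  ∃ Q : ∀ a b : C, (a ⟶ T.obj b) → (I.obj a ⟶ I.obj b),
    (∀ (a b : C) (f : a ⟶ b), Q a b (T.η.app a ≫ T.map f) = I.map f) ∧
    (∀ (a b c : C) (k : a ⟶ T.obj b) (l : b ⟶ T.obj c),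
      Q a c (k ≫ T.map l ≫ T.μ.app c) = Q a b k ≫ Q b c l)

lemma heavilyISeparable_iff {C D X : Type*} [Category C] [Category D] [Category X]
    (F : C ⥤ D) (I : C ⥤ X) :
    HeavilyISeparable F I ↔ ∃ P : ∀ a b : C, (F.obj a ⟶ F.obj b) → (I.obj a ⟶ I.obj b),
      (∀ (a b : C) (f : a ⟶ b), P a b (F.map f) = I.map f) ∧
      (∀ (a b c : C) (f : F.obj a ⟶ F.obj b) (g : F.obj b ⟶ F.obj c),
        P a c (f ≫ g) = P a b f ≫ P b c g) := by
  refine ⟨fun ⟨P, _, map, comp⟩ => ⟨P, map, comp⟩,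
    fun ⟨P, map, comp⟩ => ⟨P, ?_, map, comp⟩⟩
  intro a' a b b' u v h
  rw [comp, comp, map, map]

namespace CategoryTheory.Adjunction

variable {C D X : Type*} [Category C] [Category D] [Category X] {F : C ⥤ D} {G : D ⥤ C}
  (adj : F ⊣ G)

lemma homEquiv_comp {a b c : C} (f : F.obj a ⟶ F.obj b) (g : F.obj b ⟶ F.obj c) :
    adj.homEquiv a (F.obj c) (f ≫ g) =
      adj.homEquiv a (F.obj b) f ≫ G.map (F.map (adj.homEquiv b (F.obj c) g)) ≫
        G.map (adj.counit.app (F.obj c)) := by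
  rw [homEquiv_naturality_right]
  conv_lhs => rw [← (adj.homEquiv b (F.obj c)).symm_apply_apply g, homEquiv_counit, G.map_comp]

lemma homEquiv_symm_comp {a b c : C} (k : a ⟶ G.obj (F.obj b)) (l : b ⟶ G.obj (F.obj c)) :
    (adj.homEquiv a (F.obj c)).symm (k ≫ G.map (F.map l) ≫ G.map (adj.counit.app (F.obj c))) =
      (adj.homEquiv a (F.obj b)).symm k ≫ (adj.homEquiv b (F.obj c)).symm l := by
  rw [Equiv.symm_apply_eq, homEquiv_comp, Equiv.apply_symm_apply, Equiv.apply_symm_apply]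

lemma heavilyISeparable_iff_toMonad (I : C ⥤ X) :
    HeavilyISeparable F I ↔ adj.toMonad.HeavilyISeparable I := by
  rw [heavilyISeparable_iff]
  constructor
  · rintro ⟨P, map, comp⟩
    refine ⟨fun a b k => P a b ((adj.homEquiv a (F.obj b)).symm k), fun a b f => ?_,
      fun a b c k l => (congrArg (P a c) (adj.homEquiv_symm_comp k l)).trans (comp _ _ _ _ _)⟩
    exact (congrArg (P a b) ((Equiv.symm_apply_eq _).mpr (adj.homEquiv_unit _ _ _))).trans
      (map a b f)
  · rintro ⟨Q, map, comp⟩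
    refine ⟨fun a b h => Q a b (adj.homEquiv a (F.obj b) h),
      fun a b f => (congrArg (Q a b) (adj.homEquiv_unit _ _ _)).trans (map a b f),
      fun a b c f g => (congrArg (Q a c) (adj.homEquiv_comp f g)).trans (comp _ _ _ _ _)⟩

end CategoryTheory.Adjunction

/-- If two adjunctions `(F,G)` and `(F',G')` determine the same monad on `C`, then `F` is
heavily `I`-separable iff `F'` is. -/
theorem heavilyISeparable_of_same_monad {C D D' X : Type*} [Category C] [Category D]
    [Category D'] [Category X]
    (F : C ⥤ D) (G : D ⥤ C) (adj : F ⊣ G)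
    (F' : C ⥤ D') (G' : D' ⥤ C) (adj' : F' ⊣ G')
    (hmonad : adj.toMonad = adj'.toMonad) (I : C ⥤ X) :
    HeavilyISeparable F I ↔ HeavilyISeparable F' I := by
  rw [adj.heavilyISeparable_iff_toMonad, adj'.heavilyISeparable_iff_toMonad, hmonad]
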